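/- Fix integers n ≥ k ≥ 3 and let the edges of K_n carry independent uniform [0,1] weights. Let α and β be two k-element vertex subsets sharing exactly ℓ vertices, 2 ≤ ℓ ≤ k−1, and set m_ℓ = C(k,2) − C(ℓ,2). Then for every w with 0 ≤ w ≤ 1, the conditional probability that the clique on β has total weight at most w, given that the clique on α has total weight at most w, is at most w^{m_ℓ}/m_ℓ!. -/

import Mathlib

open MeasureTheory

/-- Product measure on the edge weights of `K_n`: each edge (element of `Sym2 (Fin n)`)
gets an independent uniform `[0,1]` weight. -/
noncomputable def edgeMeasure (n : ℕ) : Measure (Sym2 (Fin n) → ℝ) :=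
  Measure.pi fun _ => volume.restrict (Set.Icc (0 : ℝ) 1)

/-- The weight of the clique on the vertex set `S`: the sum of the weights of the
edges with both endpoints in `S`. -/
noncomputable def cliqueWeight {n : ℕ} (S : Finset (Fin n)) (ω : Sym2 (Fin n) → ℝ) : ℝ :=
  ∑ e ∈ S.sym2.filter (fun e => ¬ e.IsDiag), ω e

/-! Let `F` be the set of edges of `β` that are not edges of `α`; it has `C(k,2) - C(ℓ,2)`
elements. Weights are nonnegative, so if the clique on `β` weighs at most `w` then so does `F`,
and the weight of `F` is independent of the weight of the clique on `α`, which uses no edge of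
`F`. The conditional probability is therefore at most `P(∑_{e ∈ F} ω e ≤ w)`. This is the volume
of `{x ∈ [0,1]^m | ∑ x ≤ w}`, at most the volume `w^m/m!` of the simplex; the bound follows by
induction on `m`, integrating out one coordinate. -/

open ProbabilityTheory Set Finset
open scoped ENNReal Nat

instance : IsProbabilityMeasure (volume.restrict (Icc (0 : ℝ) 1)) := ⟨by simp⟩

noncomputable abbrev unitCubeMeasure (ι : Type*) [Fintype ι] : Measure (ι → ℝ) :=
  Measure.pi fun _ => volume.restrict (Icc (0 : ℝ) 1)

section Edges

variable {α : Type*} [DecidableEq α]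

def cliqueEdges (s : Finset α) : Finset (Sym2 α) := {e ∈ s.sym2 | ¬ e.IsDiag}

lemma card_cliqueEdges (s : Finset α) : #(cliqueEdges s) = (#s).choose 2 := by
  rw [cliqueEdges, sym2_eq_image, Sym2.filter_image_mk_not_isDiag, Sym2.card_image_offDiag]

lemma cliqueEdges_inter (s t : Finset α) :
    cliqueEdges (s ∩ t) = cliqueEdges s ∩ cliqueEdges t := by
  ext e
  induction e using Sym2.ind
  simp only [cliqueEdges, Finset.mem_filter, Finset.mem_inter, Finset.mk_mem_sym2_iff]
  tauto

end Edges

lemma ProbabilityTheory.iIndepFun.indepFun_finsetSum_finsetSum {Ω ι : Type*}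
    [MeasurableSpace Ω] {μ : Measure Ω} {f : ι → Ω → ℝ} (hf : iIndepFun f μ)
    (hmeas : ∀ i, Measurable (f i)) {S T : Finset ι} (hST : Disjoint S T) :
    IndepFun (fun ω => ∑ i ∈ S, f i ω) (fun ω => ∑ i ∈ T, f i ω) μ := by
  have hsumS : Measurable fun x : S → ℝ => ∑ i, x i := by fun_prop
  have hsumT : Measurable fun x : T → ℝ => ∑ i, x i := by fun_prop
  have := (hf.indepFun_finset S T hST hmeas).comp hsumS hsumT
  convert this using 1 <;> ext ω <;> exact (sum_coe_sort _ fun i => f i ω).symm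

lemma cond_le_of_inter_eq_mul_of_ae_le {Ω : Type*} [MeasurableSpace Ω] {μ : Measure Ω}
    {s t u : Set Ω} (hs : MeasurableSet s) (hs_fin : μ s ≠ ∞) (hsu : μ (s ∩ u) = μ s * μ u)
    (htu : t ≤ᵐ[μ] u) : μ[t | s] ≤ μ u := by
  by_cases h0 : μ s = 0
  · simp [cond_eq_zero_of_meas_eq_zero h0]
  calc μ[t | s] ≤ μ[u | s] := measure_mono_ae (cond_absolutelyContinuous.ae_le htu)
    _ = μ u := by
      rw [cond_apply hs, hsu, ← mul_assoc, ENNReal.inv_mul_cancel h0 hs_fin, one_mul]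

lemma lintegral_Icc_sub_pow_div_factorial {w : ℝ} (hw : 0 ≤ w) (m : ℕ) :
    ∫⁻ t in Icc 0 w, ENNReal.ofReal ((w - t) ^ m / m !)
      = ENNReal.ofReal (w ^ (m + 1) / (m + 1)!) := by
  rw [← ofReal_integral_eq_lintegral_ofReal (Continuous.integrableOn_Icc (by fun_prop))]
  · rw [integral_Icc_eq_integral_Ioc, ← intervalIntegral.integral_of_le hw,
      intervalIntegral.integral_div, intervalIntegral.integral_comp_sub_left (fun x => x ^ m) w,
      sub_self, sub_zero, integral_pow, Nat.factorial_succ]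
    push_cast
    rw [zero_pow (by omega), sub_zero]
    field_simp
  · filter_upwards [ae_restrict_mem measurableSet_Icc] with t ht
    exact div_nonneg (pow_nonneg (by linarith [ht.2]) m) (by positivity)

lemma measure_add_le_le_of_indepFun {Ω : Type*} [MeasurableSpace Ω] {μ : Measure Ω}
    [IsProbabilityMeasure μ] {X Y : Ω → ℝ} (hX : Measurable X) (hY : Measurable Y)
    (hXY : IndepFun X Y μ) (hX0 : 0 ≤ᵐ[μ] X) (hXvol : μ.map X ≤ volume) (hY0 : 0 ≤ᵐ[μ] Y)
    {m : ℕ} (hYle : ∀ v, 0 ≤ v → μ {ω | Y ω ≤ v} ≤ ENNReal.ofReal (v ^ m / m !))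
    {w : ℝ} (hw : 0 ≤ w) :
    μ {ω | X ω + Y ω ≤ w} ≤ ENNReal.ofReal (w ^ (m + 1) / (m + 1)!) := by
  set g : ℝ → ℝ≥0∞ := (Icc 0 w).indicator fun t => ENNReal.ofReal ((w - t) ^ m / m !) with hg
  have hS : MeasurableSet {p : ℝ × ℝ | p.1 + p.2 ≤ w} :=
    measurableSet_le (by fun_prop) (by fun_prop)
  have hslice : ∀ t,
      μ.map Y (Prod.mk t ⁻¹' {p : ℝ × ℝ | p.1 + p.2 ≤ w}) = μ {ω | Y ω ≤ w - t} := by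
    intro t
    rw [Measure.map_apply hY (measurable_prodMk_left hS)]
    congr 1
    ext ω
    simp [le_sub_iff_add_le']
  have hYnull : μ {ω | Y ω < 0} = 0 := by
    have := ae_iff.1 hY0
    simpa only [Pi.zero_apply, not_le] using this
  have hbound : ∀ t, 0 ≤ t → μ {ω | Y ω ≤ w - t} ≤ g t := by
    intro t ht
    by_cases htw : t ≤ w
    · rw [hg, indicator_of_mem (Set.mem_Icc.2 ⟨ht, htw⟩)]
      exact hYle _ (sub_nonneg.2 htw)
    · refine (measure_mono_null (fun ω (hω : Y ω ≤ w - t) => ?_) hYnull).trans_le zero_le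
      show Y ω < 0
      linarith
  have hX0' : ∀ᵐ t ∂μ.map X, 0 ≤ t := (ae_map_iff hX.aemeasurable measurableSet_Ici).2 hX0
  calc μ {ω | X ω + Y ω ≤ w}
      = μ.map (fun ω => (X ω, Y ω)) {p : ℝ × ℝ | p.1 + p.2 ≤ w} := by
        rw [Measure.map_apply (hX.prodMk hY) hS]; rfl
    _ = ∫⁻ t, μ {ω | Y ω ≤ w - t} ∂μ.map X := by
        rw [(indepFun_iff_map_prod_eq_prod_map_map hX.aemeasurable hY.aemeasurable).1 hXY,
          Measure.prod_apply hS]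
        simp_rw [hslice]
    _ ≤ ∫⁻ t, g t ∂μ.map X := lintegral_mono_ae (hX0'.mono hbound)
    _ ≤ ∫⁻ t, g t := lintegral_mono' hXvol le_rfl
    _ = ENNReal.ofReal (w ^ (m + 1) / (m + 1)!) := by
        rw [lintegral_indicator measurableSet_Icc, lintegral_Icc_sub_pow_div_factorial hw]

lemma ae_nonneg_unitCubeMeasure (ι : Type*) [Fintype ι] :
    ∀ᵐ ω ∂unitCubeMeasure ι, ∀ i, 0 ≤ ω i :=
  ae_all_iff.2 fun i => (measurePreserving_eval _ i).quasiMeasurePreserving.ae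
    ((ae_restrict_mem measurableSet_Icc).mono fun _ h => h.1)

lemma iIndepFun_unitCubeMeasure (ι : Type*) [Fintype ι] :
    iIndepFun (fun i (ω : ι → ℝ) => ω i) (unitCubeMeasure ι) :=
  iIndepFun_pi (X := fun _ => id) fun _ => aemeasurable_id

lemma unitCubeMeasure_sum_le_le {ι : Type*} [Fintype ι] [DecidableEq ι] (F : Finset ι)
    {w : ℝ} (hw : 0 ≤ w) :
    unitCubeMeasure ι {ω | ∑ i ∈ F, ω i ≤ w} ≤ ENNReal.ofReal (w ^ #F / (#F)!) := by
  induction F using Finset.induction_on generalizing w with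
  | empty => simp [hw]
  | insert a s ha ih =>
    have hindep := (iIndepFun_unitCubeMeasure ι).indepFun_finsetSum_finsetSum
      (fun i => measurable_pi_apply i) (disjoint_singleton_left.2 ha)
    simp only [sum_singleton] at hindep
    simp only [sum_insert ha, card_insert_of_notMem ha]
    refine measure_add_le_le_of_indepFun (measurable_pi_apply a) (by fun_prop) hindep
      ((ae_nonneg_unitCubeMeasure ι).mono fun _ h => h a) ?_
      ((ae_nonneg_unitCubeMeasure ι).mono fun _ h => sum_nonneg fun i _ => h i)
      (fun _ => ih) hw
    rw [(measurePreserving_eval _ a).map_eq]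
    exact Measure.restrict_le_self

lemma unitCubeMeasure_cond_sum_le_le {ι : Type*} [Fintype ι] [DecidableEq ι] (A B : Finset ι)
    {w : ℝ} (hw : 0 ≤ w) :
    (unitCubeMeasure ι)[{ω | ∑ i ∈ B, ω i ≤ w} | {ω | ∑ i ∈ A, ω i ≤ w}]
      ≤ ENNReal.ofReal (w ^ #(B \ A) / (#(B \ A))!) := by
  have hindep := (iIndepFun_unitCubeMeasure ι).indepFun_finsetSum_finsetSum
    (fun i => measurable_pi_apply i) (disjoint_sdiff (s := A) (t := B))
  have hmul := hindep.measure_inter_preimage_eq_mul (Set.Iic w) (Set.Iic w) measurableSet_Iic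
    measurableSet_Iic
  refine (cond_le_of_inter_eq_mul_of_ae_le (measurableSet_le (by fun_prop) (by fun_prop))
    (measure_ne_top _ _) hmul ?_).trans (unitCubeMeasure_sum_le_le _ hw)
  filter_upwards [ae_nonneg_unitCubeMeasure ι] with ω hω (hB : ∑ i ∈ B, ω i ≤ w)
  exact (sum_le_sum_of_subset_of_nonneg sdiff_subset fun i _ _ => hω i).trans hB

theorem statement9_general (n k ℓ : ℕ)
    (α β : Finset (Fin n)) (hβ : β.card = k)
    (hshared : (α ∩ β).card = ℓ)
    (w : ℝ) (hw0 : 0 ≤ w) :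
    ((ProbabilityTheory.cond (edgeMeasure n) {ω | cliqueWeight α ω ≤ w})
          {ω | cliqueWeight β ω ≤ w}).toReal
      ≤ w ^ (k.choose 2 - ℓ.choose 2) / ((k.choose 2 - ℓ.choose 2).factorial : ℝ) := by
  have hcard : #(cliqueEdges β \ cliqueEdges α) = k.choose 2 - ℓ.choose 2 := by
    rw [card_sdiff, ← cliqueEdges_inter, card_cliqueEdges, card_cliqueEdges, hβ, hshared]
  refine ENNReal.toReal_le_of_le_ofReal (by positivity) ?_
  rw [← hcard]
  exact unitCubeMeasure_cond_sum_le_le (cliqueEdges α) (cliqueEdges β) hw0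

theorem statement9 (n k ℓ : ℕ) (hk : 3 ≤ k) (hkn : k ≤ n)
    (hl2 : 2 ≤ ℓ) (hlk : ℓ ≤ k - 1)
    (α β : Finset (Fin n)) (hα : α.card = k) (hβ : β.card = k)
    (hshared : (α ∩ β).card = ℓ)
    (w : ℝ) (hw0 : 0 ≤ w) (hw1 : w ≤ 1) :
    ((ProbabilityTheory.cond (edgeMeasure n) {ω | cliqueWeight α ω ≤ w})
          {ω | cliqueWeight β ω ≤ w}).toReal
      ≤ w ^ (k.choose 2 - ℓ.choose 2) / ((k.choose 2 - ℓ.choose 2).factorial : ℝ) :=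
  statement9_general n k ℓ α β hβ hshared w hw0
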